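/- Let Γ = ⟨α_1, …, α_k⟩ ⊂ ℕ^d be an affine semigroup and γ ∈ Γ. For each i ≤ k with γ − α_i ∈ Γ, let T_i denote the image in K_γ of a minimum weight spanning tree of K_{γ−α_i} under the cover morphism ψ_i (the map sending each factorization z ∈ Z_Γ(γ−α_i) to z + e_i ∈ Z_Γ(γ), where e_i is the i-th standard basis vector). Let E' be the set of elements of the Graver basis of Γ that lie in Z_Γ(γ) × Z_Γ(γ). Then the graph G' with vertex set Z_Γ(γ) and edge set E(T_1) ∪ ⋯ ∪ E(T_k) ∪ E' is connected. -/

import Mathlib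

open Finset

/-- The factorization homomorphism `φ_Γ : ℕ^k → ℕ^d` determined by the
generators `α 1, …, α k`. -/
def phi {d k : ℕ} (α : Fin k → Fin d → ℕ) (z : Fin k → ℕ) : Fin d → ℕ :=
  ∑ i, z i • α i

/-- The length `|z|` of a factorization. -/
def len {k : ℕ} (z : Fin k → ℕ) : ℕ := ∑ i, z i

/-- The greatest common divisor `gcd(z,w)` of two factorizations. -/
def gcdF {k : ℕ} (z w : Fin k → ℕ) : Fin k → ℕ := fun i => min (z i) (w i)

/-- The distance `dist(z,w) = max(|z − gcd(z,w)|, |w − gcd(z,w)|)`. -/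
def distF {k : ℕ} (z w : Fin k → ℕ) : ℕ :=
  max (len (z - gcdF z w)) (len (w - gcdF z w))

/-- The set of factorizations `Z_Γ(γ)`, as a type. -/
def FactType {d k : ℕ} (α : Fin k → Fin d → ℕ) (γ : Fin d → ℕ) : Type :=
  {z : Fin k → ℕ // phi α z = γ}

/-- The weight of a walk in an edge-weighted graph: the maximum of the weights
of its edges (`0` for a trivial walk). -/
def walkWeight {V : Type*} (wt : V → V → ℕ) {G : SimpleGraph V} {u v : V}
    (p : G.Walk u v) : ℕ :=
  (p.darts.map fun e => wt e.toProd.1 e.toProd.2).foldr max 0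

/-- `T` is a minimum weight spanning tree of the graph `G` with edge weights
`wt`: it is a spanning tree of `G`, and the unique path in `T` between any two
vertices is a minimum weight chain in `G`. -/
def IsMWSpanningTree {V : Type*} (wt : V → V → ℕ) (G T : SimpleGraph V) : Prop :=
  T ≤ G ∧ T.IsTree ∧
    ∀ (u v : V) (p : T.Walk u v), p.IsPath →
      ∀ q : G.Walk u v, walkWeight wt p ≤ walkWeight wt q

/-- There is an `N`-chain from `z` to `w` (w.r.t. the distance function `wt`). -/
def IsNChain {V : Type*} (wt : V → V → ℕ) (N : ℕ) (z w : V) : Prop :=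
  ∃ (r : ℕ) (c : Fin (r + 1) → V), c 0 = z ∧ c (Fin.last r) = w ∧
    ∀ i : Fin r, wt (c i.castSucc) (c i.succ) ≤ N

/-- The catenary degree `c(γ)`: the smallest `N` such that any two
factorizations of `γ` are connected by an `N`-chain. -/
noncomputable def catDeg {d k : ℕ} (α : Fin k → Fin d → ℕ) (γ : Fin d → ℕ) : ℕ :=
  sInf {N : ℕ | ∀ z w : FactType α γ,
    IsNChain (fun a b => distF a.val b.val) N z w}

/-- The set of factorizations `Z_Γ(γ − α_i)`, realized as the set of `z` with
`φ_Γ(z) + α_i = γ` (it is empty when `γ − α_i ∉ Γ`). -/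
def FactSub {d k : ℕ} (α : Fin k → Fin d → ℕ) (γ : Fin d → ℕ) (i : Fin k) : Type :=
  {z : Fin k → ℕ // phi α z + α i = γ}

/-- `p` belongs to the Graver basis of `Γ`: `p` is a minimal element, with
respect to the componentwise order on `ℕ^k × ℕ^k`, of
`{(z,w) : φ_Γ(z) = φ_Γ(w)} \ {(0,0)}`. -/
def IsGraver {d k : ℕ} (α : Fin k → Fin d → ℕ)
    (p : (Fin k → ℕ) × (Fin k → ℕ)) : Prop :=
  phi α p.1 = phi α p.2 ∧ p ≠ 0 ∧
    ∀ q : (Fin k → ℕ) × (Fin k → ℕ),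
      phi α q.1 = phi α q.2 → q ≠ 0 → q ≤ p → q = p

/-- The graph `G'` on `Z_Γ(γ)` whose edges are the images under the cover
morphisms `ψ_i : z ↦ z + e_i` of the edges of the trees `T i` on `Z_Γ(γ − α_i)`,
together with the Graver basis elements lying in `Z_Γ(γ) × Z_Γ(γ)`. -/
def Gprime {d k : ℕ} (α : Fin k → Fin d → ℕ) (γ : Fin d → ℕ)
    (T : ∀ i : Fin k, SimpleGraph (FactSub α γ i)) :
    SimpleGraph (FactType α γ) :=
  SimpleGraph.fromRel fun u v =>
    (∃ (i : Fin k) (z w : FactSub α γ i), (T i).Adj z w ∧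
      u.val = z.val + Pi.single i 1 ∧ v.val = w.val + Pi.single i 1) ∨
    IsGraver α (u.val, v.val)

/-!
Two factorizations `u, v` of `γ` that share a generator `α_i` both lie in the image of `ψ_i`,
so they are joined through the connected tree `T_i`. Otherwise pick a Graver element
`(a, b) ≤ (u, v)`, say with `b ≠ 0` (else swap the roles of `u` and `v`), and let
`m = u - a + b`, again a factorization of `γ`. Then `m` shares with `v` every generator in the
support of `b`, and `m` either shares with `u` a generator in the support of `u - a`, or
`u = a` and `m = b`, so that `u` and `m` are equal or joined by the Graver edge `(a, b)`.
-/

open SimpleGraph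

variable {d k : ℕ} {α : Fin k → Fin d → ℕ}

lemma phi_add (x y : Fin k → ℕ) : phi α (x + y) = phi α x + phi α y := by
  simp [phi, add_smul, Finset.sum_add_distrib]

lemma phi_single (i : Fin k) : phi α (Pi.single i 1) = α i := by
  simp [phi, Pi.single_apply]

lemma IsGraver.swap {p : (Fin k → ℕ) × (Fin k → ℕ)} (h : IsGraver α p) :
    IsGraver α p.swap := by
  obtain ⟨hφ, hp, hmin⟩ := h
  refine ⟨hφ.symm, (Prod.swap_injective.ne_iff' rfl).mpr hp, fun q hq hq0 hqp => ?_⟩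
  exact congrArg Prod.swap <| hmin q.swap hq.symm ((Prod.swap_injective.ne_iff' rfl).mpr hq0)
    (Prod.swap_le_swap (y := p.swap).mpr hqp)

lemma exists_isGraver_le {p : (Fin k → ℕ) × (Fin k → ℕ)} (hφ : phi α p.1 = phi α p.2)
    (hp : p ≠ 0) : ∃ q, IsGraver α q ∧ q ≤ p := by
  obtain ⟨q, ⟨hqφ, hq0, hqp⟩, hmin⟩ := wellFounded_lt.has_min
    {q | phi α q.1 = phi α q.2 ∧ q ≠ 0 ∧ q ≤ p} ⟨p, hφ, hp, le_rfl⟩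
  refine ⟨q, ⟨hqφ, hq0, fun r hr hr0 hrq => ?_⟩, hqp⟩
  by_contra hne
  exact hmin r ⟨hr, hr0, hrq.trans hqp⟩ (lt_of_le_of_ne hrq hne)

namespace Gprime

variable {γ : Fin d → ℕ} {T : ∀ i : Fin k, SimpleGraph (FactSub α γ i)}

def coverHom (i : Fin k) : T i →g Gprime α γ T where
  toFun z := ⟨z.val + Pi.single i 1, by rw [phi_add, phi_single]; exact z.property⟩
  map_rel' {z w} h := (fromRel_adj _ _ _).mpr
    ⟨fun hzw => h.ne (Subtype.ext (add_right_cancel (congrArg Subtype.val hzw))),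
    Or.inl (Or.inl ⟨i, z, w, h, rfl, rfl⟩)⟩

lemma exists_coverHom_eq {u : FactType α γ} {i : Fin k} (hu : 0 < u.val i) :
    ∃ z : FactSub α γ i, coverHom (T := T) i z = u := by
  have hle : Pi.single i 1 ≤ u.val := fun j => by
    rcases eq_or_ne j i with rfl | hj
    · simp only [Pi.single_eq_same]; exact hu
    · simp [hj]
  refine ⟨⟨u.val - Pi.single i 1, ?_⟩, Subtype.ext (tsub_add_cancel_of_le hle)⟩
  rw [← phi_single (α := α) i, ← phi_add, tsub_add_cancel_of_le hle]
  exact u.property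

lemma reachable_of_pos (hT : ∀ i, (T i).Preconnected) {u v : FactType α γ} {i : Fin k}
    (hu : 0 < u.val i) (hv : 0 < v.val i) : (Gprime α γ T).Reachable u v := by
  obtain ⟨z, rfl⟩ := exists_coverHom_eq (T := T) hu
  obtain ⟨w, rfl⟩ := exists_coverHom_eq (T := T) hv
  exact (hT i z w).map (coverHom i)

lemma adj_of_isGraver {u v : FactType α γ} (huv : u ≠ v) (h : IsGraver α (u.val, v.val)) :
    (Gprime α γ T).Adj u v := by
  rw [Gprime, fromRel_adj]
  exact ⟨huv, Or.inl (Or.inr h)⟩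

lemma reachable_of_isGraver_le (hT : ∀ i, (T i).Preconnected) {u v : FactType α γ}
    {a b : Fin k → ℕ} (hab : IsGraver α (a, b)) (ha : a ≤ u.val) (hb : b ≤ v.val)
    (hb0 : b ≠ 0) : (Gprime α γ T).Reachable u v := by
  let m : FactType α γ := ⟨u.val - a + b, by
    rw [phi_add, ← hab.1, ← phi_add, tsub_add_cancel_of_le ha]; exact u.property⟩
  have hm : m.val = u.val - a + b := rfl
  obtain ⟨j, hj⟩ := Function.ne_iff.mp hb0
  replace hj : 0 < b j := Nat.pos_of_ne_zero hj
  have hmv : (Gprime α γ T).Reachable m v :=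
    reachable_of_pos hT (i := j) (by simp only [hm, Pi.add_apply]; omega) (hj.trans_le (hb j))
  refine Reachable.trans ?_ hmv
  by_cases hua : u.val - a = 0
  · by_cases hum : u = m
    · exact hum ▸ Reachable.refl u
    · have hu : u.val = a := le_antisymm (tsub_eq_zero_iff_le.mp hua) ha
      refine (adj_of_isGraver hum ?_).reachable
      rwa [hm, hua, zero_add, hu]
  · obtain ⟨i, hi⟩ := Function.ne_iff.mp hua
    replace hi : 0 < u.val i - a i := Nat.pos_of_ne_zero hi
    exact reachable_of_pos hT (i := i) (hi.trans_le tsub_le_self)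
      (by simp only [hm, Pi.add_apply, Pi.sub_apply]; omega)

end Gprime

/-- If each `T i` is (the image under `ψ_i` of) a minimum weight spanning tree
of the catenary graph `K_{γ−α_i}` (whenever `γ − α_i ∈ Γ`), then the graph `G'`
with vertex set `Z_Γ(γ)` and edges `E(T_1) ∪ ⋯ ∪ E(T_k) ∪ E'` is connected. -/
theorem stmt9 {d k : ℕ} (α : Fin k → Fin d → ℕ) (γ : Fin d → ℕ)
    (hγ : γ ∈ Set.range (phi α))
    (T : ∀ i : Fin k, SimpleGraph (FactSub α γ i))
    (hT : ∀ i : Fin k, Nonempty (FactSub α γ i) →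
      IsMWSpanningTree (fun z w => distF z.val w.val) ⊤ (T i)) :
    (Gprime α γ T).Connected := by
  have hconn : ∀ i, (T i).Preconnected := fun i z w =>
    (hT i ⟨z⟩).2.1.connected.preconnected z w
  obtain ⟨z, hz⟩ := hγ
  have : Nonempty (FactType α γ) := ⟨⟨z, hz⟩⟩
  refine Connected.mk fun u v => ?_
  by_cases huv : (u.val, v.val) = 0
  · rw [Prod.mk_eq_zero] at huv
    obtain rfl : u = v := Subtype.ext (huv.1.trans huv.2.symm)
    exact Reachable.refl u
  obtain ⟨⟨a, b⟩, hab, ha, hb⟩ :=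
    exists_isGraver_le (p := (u.val, v.val)) (u.property.trans v.property.symm) huv
  by_cases hb0 : b = 0
  · have ha0 : a ≠ 0 := by
      rintro rfl
      exact hab.2.1 (by rw [hb0]; rfl)
    exact (Gprime.reachable_of_isGraver_le hconn hab.swap hb ha ha0).symm
  · exact Gprime.reachable_of_isGraver_le hconn hab ha hb hb0
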